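/- arXiv:2204.06473 — 2 statements merged into one kernel-verified Lean document; each statement's English description precedes it below -/
import Mathlib

section
/- Let U ⊆ ℂ^N be open and S a finite index set. Let a = (a_{m,n}) and b = (b_{m,n}) be families of holomorphic functions U → ℂ indexed by m ∈ ℕ^S and n ∈ ℤ, each satisfying condition (O^{y,z,z⁻¹}). Then for every m ∈ ℕ^S and n ∈ ℤ the convolution sum c_{m,n} = Σ_{m₁+m₂=m, n₁+n₂=n} a_{m₁,n₁} · b_{m₂,n₂} has only finitely many nonzero terms, and the family c = (c_{m,n}) again satisfies condition (O^{y,z,z⁻¹}). In other words, the space O^{y,z,z⁻¹}_λ(U) is closed under multiplication of formal series Σ a_{m,n} y^m z^n. -/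
/-- The total degree `|m| = ∑_s m_s` of a multi-index `m ∈ ℕ^S`. -/
def wtF {S : Type*} (m : S →₀ ℕ) : ℕ := m.sum fun _ v => v

/-- Condition `(O^{y,z,z⁻¹})` on a family of functions `a_{m,n} : U → ℂ` (`m ∈ ℕ^S`, `n ∈ ℤ`):
there exist a continuous `C : U → [1, ∞)` and a constant `C' ≥ 1` such that
(1) `a_{m,n} = 0` whenever `n < −C'(|m| + 1)`, and
(2) `|a_{m,n}(λ)| ≤ C(λ)^{|m|+|n|+1} · n!` if `n ≥ 0`, and
    `|a_{m,n}(λ)| ≤ C(λ)^{|m|+|n|+1} / (−n)!` if `n < 0`. -/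
def CondOyzzinv {N : ℕ} {S : Type*} (U : Set (Fin N → ℂ))
    (a : (S →₀ ℕ) → ℤ → (Fin N → ℂ) → ℂ) : Prop :=
  ∃ (C : (Fin N → ℂ) → ℝ) (C' : ℝ), ContinuousOn C U ∧ (∀ x ∈ U, 1 ≤ C x) ∧ 1 ≤ C' ∧
    (∀ (m : S →₀ ℕ) (n : ℤ), (n : ℝ) < -C' * ((wtF m : ℝ) + 1) → ∀ x ∈ U, a m n x = 0) ∧
    (∀ m n x, x ∈ U → ‖a m n x‖ ≤
      C x ^ (wtF m + n.natAbs + 1) *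
        (if 0 ≤ n then ((n.toNat).factorial : ℝ) else (((-n).toNat).factorial : ℝ)⁻¹))

/-!
The coefficient `c_{m,n}` is a sum over the antidiagonal of `m`, which has at most `2^{|m|}`
elements, and over a window of `n₁` of length `O(|n| + K(|m|+1))`: outside it one of the two
factors vanishes by condition (1). Writing `w(n) = n!` for `n ≥ 0` and `w(n) = 1/(-n)!` for
`n < 0`, each term is controlled by `w(n₁) w(n₂) ≤ 2^{|n₁|+|n₂|} w(n₁+n₂)`, a consequence of
`i! j! ≤ (i+j)! ≤ 2^{i+j} i! j!`. Once `C ≥ 2`, every power of `2` that appears is absorbed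
into a power of `C`, so the product satisfies the condition with `C^{6K+5}` and `2K`.
-/

open Finset Nat

noncomputable def factorialWeight (n : ℤ) : ℝ :=
  if 0 ≤ n then (n.toNat ! : ℝ) else ((-n).toNat ! : ℝ)⁻¹

lemma factorialWeight_natCast (k : ℕ) : factorialWeight k = k ! := by
  simp [factorialWeight]

lemma factorialWeight_neg_natCast (k : ℕ) : factorialWeight (-k) = (k ! : ℝ)⁻¹ := by
  unfold factorialWeight
  split_ifs with h
  · obtain rfl : k = 0 := by omega
    simp
  · simp

lemma factorialWeight_pos (n : ℤ) : 0 < factorialWeight n := by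
  unfold factorialWeight; split <;> positivity

lemma Nat.factorial_mul_factorial_le_factorial_add (i j : ℕ) : i ! * j ! ≤ (i + j)! :=
  Nat.le_of_dvd (factorial_pos _) (factorial_mul_factorial_dvd_factorial_add i j)

lemma Nat.factorial_add_le_two_pow_mul (i j : ℕ) : (i + j)! ≤ 2 ^ (i + j) * (i ! * j !) := by
  rw [← Nat.add_choose_mul_factorial_mul_factorial i j, mul_assoc]
  exact Nat.mul_le_mul_right _ (Nat.choose_le_two_pow _ _)

lemma factorialWeight_natCast_mul_neg_le (i j : ℕ) :
    factorialWeight i * factorialWeight (-j) ≤ 2 ^ (i + j) * factorialWeight (i + -j) := by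
  rw [factorialWeight_natCast, factorialWeight_neg_natCast, ← div_eq_mul_inv]
  rcases le_total j i with h | h
  · obtain ⟨k, rfl⟩ := Nat.exists_eq_add_of_le h
    rw [show ((j + k : ℕ) : ℤ) + -j = k by push_cast; ring, factorialWeight_natCast,
      div_le_iff₀ (by positivity)]
    calc ((j + k)! : ℝ) ≤ 2 ^ (j + k) * (j ! * k !) := by
          exact_mod_cast Nat.factorial_add_le_two_pow_mul j k
      _ ≤ 2 ^ (j + k + j) * (j ! * k !) := by
          gcongr 2 ^ ?_ * _
          · norm_num
          · omega
      _ = 2 ^ (j + k + j) * k ! * j ! := by ring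
  · obtain ⟨k, rfl⟩ := Nat.exists_eq_add_of_le h
    rw [show (i : ℤ) + -((i + k : ℕ) : ℤ) = -k by push_cast; ring, factorialWeight_neg_natCast,
      ← div_eq_mul_inv, div_le_div_iff₀ (by positivity) (by positivity)]
    calc (i ! * k ! : ℝ) ≤ (i + k)! := by
          exact_mod_cast Nat.factorial_mul_factorial_le_factorial_add i k
      _ ≤ 2 ^ (i + (i + k)) * (i + k)! :=
          le_mul_of_one_le_left (by positivity) (one_le_pow₀ (by norm_num))

lemma factorialWeight_mul_le (n₁ n₂ : ℤ) :
    factorialWeight n₁ * factorialWeight n₂ ≤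
      2 ^ (n₁.natAbs + n₂.natAbs) * factorialWeight (n₁ + n₂) := by
  obtain ⟨i, rfl | rfl⟩ := Int.eq_nat_or_neg n₁ <;> obtain ⟨j, rfl | rfl⟩ := Int.eq_nat_or_neg n₂
    <;> simp only [Int.natAbs_neg, Int.natAbs_natCast]
  · rw [← Nat.cast_add, factorialWeight_natCast, factorialWeight_natCast, factorialWeight_natCast]
    calc (i ! * j ! : ℝ) ≤ (i + j)! := by
          exact_mod_cast Nat.factorial_mul_factorial_le_factorial_add i j
      _ ≤ 2 ^ (i + j) * (i + j)! :=
          le_mul_of_one_le_left (by positivity) (one_le_pow₀ (by norm_num))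
  · exact factorialWeight_natCast_mul_neg_le i j
  · rw [mul_comm, add_comm (-(i : ℤ)), add_comm i]
    exact factorialWeight_natCast_mul_neg_le j i
  · rw [← neg_add, ← Nat.cast_add, factorialWeight_neg_natCast, factorialWeight_neg_natCast,
      factorialWeight_neg_natCast, ← mul_inv, ← div_eq_mul_inv, le_div_iff₀ (by positivity),
      inv_mul_eq_div, div_le_iff₀ (by positivity)]
    exact_mod_cast Nat.factorial_add_le_two_pow_mul i j

lemma norm_mul_le_pow_mul_factorialWeight_add {R : Type*} [SeminormedRing R] {D : ℝ}
    (hD : 2 ≤ D) {α β : R} {i j : ℕ} {n₁ n₂ : ℤ}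
    (hα : ‖α‖ ≤ D ^ (i + n₁.natAbs + 1) * factorialWeight n₁)
    (hβ : ‖β‖ ≤ D ^ (j + n₂.natAbs + 1) * factorialWeight n₂) :
    ‖α * β‖ ≤ D ^ (i + j + 2 * (n₁.natAbs + n₂.natAbs) + 2) * factorialWeight (n₁ + n₂) := by
  have hw₁ := (factorialWeight_pos n₁).le
  have hw₂ := (factorialWeight_pos n₂).le
  set k := n₁.natAbs + n₂.natAbs
  calc ‖α * β‖ ≤ (D ^ (i + n₁.natAbs + 1) * factorialWeight n₁) *
        (D ^ (j + n₂.natAbs + 1) * factorialWeight n₂) :=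
        (norm_mul_le α β).trans (mul_le_mul hα hβ (norm_nonneg _) (by positivity))
    _ = D ^ (i + j + k + 2) * (factorialWeight n₁ * factorialWeight n₂) := by ring
    _ ≤ D ^ (i + j + k + 2) * (2 ^ k * factorialWeight (n₁ + n₂)) :=
        mul_le_mul_of_nonneg_left (factorialWeight_mul_le n₁ n₂) (pow_nonneg (by linarith) _)
    _ ≤ D ^ (i + j + k + 2) * (D ^ k * factorialWeight (n₁ + n₂)) := by
        gcongr; exact (factorialWeight_pos _).le
    _ = D ^ (i + j + 2 * k + 2) * factorialWeight (n₁ + n₂) := by ring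

lemma natCast_le_pow_of_le_two_pow {D : ℝ} (hD : 2 ≤ D) {c k : ℕ} (hc : c ≤ 2 ^ k) :
    (c : ℝ) ≤ D ^ k :=
  calc (c : ℝ) ≤ 2 ^ k := by exact_mod_cast hc
    _ ≤ D ^ k := by gcongr

section Weight

variable {S : Type*}

lemma wtF_eq_degree (m : S →₀ ℕ) : wtF m = m.degree := rfl

lemma wtF_add_of_mem_antidiagonal [DecidableEq S] {m : S →₀ ℕ} {p : (S →₀ ℕ) × (S →₀ ℕ)}
    (hp : p ∈ antidiagonal m) : wtF p.1 + wtF p.2 = wtF m := by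
  rw [← mem_antidiagonal.1 hp, wtF_eq_degree, wtF_eq_degree, wtF_eq_degree, map_add]

-- `antidiagonal m` is the image of the antidiagonal of the multiset `toMultiset m`,
-- which has `2 ^ |m|` elements.
lemma card_antidiagonal_le_two_pow_wtF [DecidableEq S] (m : S →₀ ℕ) :
    #(antidiagonal m) ≤ 2 ^ wtF m := by
  calc #(antidiagonal m) ≤ Multiset.card (Multiset.antidiagonal (Finsupp.toMultiset m)) :=
        (Multiset.toFinset_card_le _).trans (Multiset.card_map _ _).le
    _ = 2 ^ wtF m := by rw [Multiset.card_antidiagonal, Finsupp.card_toMultiset]; rfl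

end Weight

section Families

variable {N : ℕ} {S : Type*} {U : Set (Fin N → ℂ)} {a b : (S →₀ ℕ) → ℤ → (Fin N → ℂ) → ℂ}

def VanishesBelow (U : Set (Fin N → ℂ)) (a : (S →₀ ℕ) → ℤ → (Fin N → ℂ) → ℂ) (K : ℕ) : Prop :=
  ∀ m n, ∀ x ∈ U, a m n x ≠ 0 → -((K * (wtF m + 1) : ℕ) : ℤ) ≤ n

def HasFactorialBound (U : Set (Fin N → ℂ)) (a : (S →₀ ℕ) → ℤ → (Fin N → ℂ) → ℂ)
    (C : (Fin N → ℂ) → ℝ) : Prop :=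
  ∀ m n, ∀ x ∈ U, ‖a m n x‖ ≤ C x ^ (wtF m + n.natAbs + 1) * factorialWeight n

lemma VanishesBelow.mono {K K' : ℕ} (ha : VanishesBelow U a K) (hK : K ≤ K') :
    VanishesBelow U a K' := by
  intro m n x hx h
  have : K * (wtF m + 1) ≤ K' * (wtF m + 1) := by gcongr
  have := ha m n x hx h
  omega

lemma HasFactorialBound.mono {C C' : (Fin N → ℂ) → ℝ} (ha : HasFactorialBound U a C)
    (hC : ∀ x ∈ U, 0 ≤ C x) (hCC' : ∀ x ∈ U, C x ≤ C' x) : HasFactorialBound U a C' :=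
  fun m n x hx => (ha m n x hx).trans <| by
    gcongr
    · exact (factorialWeight_pos n).le
    · exact hC x hx
    · exact hCC' x hx

lemma condOyzzinv_iff :
    CondOyzzinv U a ↔ ∃ (C : (Fin N → ℂ) → ℝ) (K : ℕ), ContinuousOn C U ∧ (∀ x ∈ U, 2 ≤ C x) ∧
      1 ≤ K ∧ VanishesBelow U a K ∧ HasFactorialBound U a C := by
  constructor
  · rintro ⟨C, C', hC, hC1, hC'1, hvan, hbd⟩
    refine ⟨fun x => max (C x) 2, ⌈C'⌉₊, hC.sup continuousOn_const, fun x _ => le_max_right _ _,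
      Nat.one_le_cast.1 (hC'1.trans (Nat.le_ceil _)), ?_,
      HasFactorialBound.mono hbd (fun x hx => zero_le_one.trans (hC1 x hx))
        (fun x _ => le_max_left _ _)⟩
    intro m n x hx h
    by_contra! hlt
    refine h (hvan m n ?_ x hx)
    have : (n : ℝ) < -(⌈C'⌉₊ * (wtF m + 1) : ℕ) := by exact_mod_cast hlt
    push_cast at this
    nlinarith [Nat.le_ceil C', (wtF m).cast_nonneg (α := ℝ)]
  · rintro ⟨C, K, hC, hC2, hK, hvan, hbd⟩
    refine ⟨C, K, hC, fun x hx => one_le_two.trans (hC2 x hx), by exact_mod_cast hK, ?_, hbd⟩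
    intro m n hn x hx
    by_contra h
    have := hvan m n x hx h
    have : (-((K * (wtF m + 1) : ℕ) : ℤ) : ℝ) ≤ n := by exact_mod_cast this
    push_cast at this
    linarith

lemma CondOyzzinv.exists_common_bounds (ha : CondOyzzinv U a) (hb : CondOyzzinv U b) :
    ∃ (C : (Fin N → ℂ) → ℝ) (K : ℕ), ContinuousOn C U ∧ (∀ x ∈ U, 2 ≤ C x) ∧ 1 ≤ K ∧
      VanishesBelow U a K ∧ VanishesBelow U b K ∧
      HasFactorialBound U a C ∧ HasFactorialBound U b C := by
  obtain ⟨Ca, Ka, hCa, hCa2, hKa, hva, hba⟩ := condOyzzinv_iff.1 ha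
  obtain ⟨Cb, Kb, hCb, hCb2, -, hvb, hbb⟩ := condOyzzinv_iff.1 hb
  refine ⟨fun x => max (Ca x) (Cb x), max Ka Kb, hCa.sup hCb,
    fun x hx => (hCa2 x hx).trans (le_max_left _ _), hKa.trans (le_max_left _ _),
    hva.mono (le_max_left _ _), hvb.mono (le_max_right _ _),
    hba.mono (fun x hx => ?_) fun _ _ => le_max_left _ _,
    hbb.mono (fun x hx => ?_) fun _ _ => le_max_right _ _⟩
  · linarith [hCa2 x hx]
  · linarith [hCb2 x hx]

end Families

section SeriesMul

variable {N : ℕ} {S : Type*} [DecidableEq S] {U : Set (Fin N → ℂ)}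
  {a b : (S →₀ ℕ) → ℤ → (Fin N → ℂ) → ℂ} {K : ℕ} {C : (Fin N → ℂ) → ℝ}

noncomputable def seriesMul (a b : (S →₀ ℕ) → ℤ → (Fin N → ℂ) → ℂ) :
    (S →₀ ℕ) → ℤ → (Fin N → ℂ) → ℂ :=
  fun m n x => ∑ p ∈ antidiagonal m, ∑ᶠ n₁ : ℤ, a p.1 n₁ x * b p.2 (n - n₁) x

lemma VanishesBelow.mem_Icc_of_mul_ne_zero (ha : VanishesBelow U a K) (hb : VanishesBelow U b K)
    {m : S →₀ ℕ} {p : (S →₀ ℕ) × (S →₀ ℕ)} {n n₁ : ℤ} {x : Fin N → ℂ}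
    (hp : p ∈ antidiagonal m) (hx : x ∈ U) (h : a p.1 n₁ x * b p.2 (n - n₁) x ≠ 0) :
    n₁ ∈ Icc (-((K * (wtF m + 1) : ℕ) : ℤ)) (n + (K * (wtF m + 1) : ℕ)) := by
  have ha' := ha _ _ x hx (left_ne_zero_of_mul h)
  have hb' := hb _ _ x hx (right_ne_zero_of_mul h)
  have hw := wtF_add_of_mem_antidiagonal hp
  have h₁ : K * (wtF p.1 + 1) ≤ K * (wtF m + 1) := by gcongr; omega
  have h₂ : K * (wtF p.2 + 1) ≤ K * (wtF m + 1) := by gcongr; omega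
  rw [mem_Icc]
  omega

lemma VanishesBelow.finite_setOf_mul_ne_zero (ha : VanishesBelow U a K)
    (hb : VanishesBelow U b K) (m : S →₀ ℕ) (n : ℤ) :
    {q : ((S →₀ ℕ) × (S →₀ ℕ)) × ℤ | q.1 ∈ antidiagonal m ∧
      ∃ x ∈ U, a q.1.1 q.2 x * b q.1.2 (n - q.2) x ≠ 0}.Finite := by
  refine (antidiagonal m ×ˢ Icc (-((K * (wtF m + 1) : ℕ) : ℤ)) (n + (K * (wtF m + 1) : ℕ))
    ).finite_toSet.subset ?_
  rintro ⟨p, n₁⟩ ⟨hp, x, hx, h⟩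
  exact mem_product.2 ⟨hp, ha.mem_Icc_of_mul_ne_zero hb hp hx h⟩

lemma VanishesBelow.seriesMul (ha : VanishesBelow U a K) (hb : VanishesBelow U b K) :
    VanishesBelow U (seriesMul a b) (2 * K) := by
  intro m n x hx h
  obtain ⟨p, hp, hsum⟩ := exists_ne_zero_of_sum_ne_zero h
  obtain ⟨n₁, hn₁⟩ : ∃ n₁, a p.1 n₁ x * b p.2 (n - n₁) x ≠ 0 := by
    by_contra! h0
    exact hsum (finsum_eq_zero_of_forall_eq_zero h0)
  have := mem_Icc.1 (ha.mem_Icc_of_mul_ne_zero hb hp hx hn₁)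
  have : 2 * K * (wtF m + 1) = 2 * (K * (wtF m + 1)) := by ring
  omega

lemma seriesMul_eq_sum_Icc (ha : VanishesBelow U a K) (hb : VanishesBelow U b K)
    (m : S →₀ ℕ) (n : ℤ) {x : Fin N → ℂ} (hx : x ∈ U) :
    seriesMul a b m n x = ∑ p ∈ antidiagonal m,
      ∑ n₁ ∈ Icc (-((K * (wtF m + 1) : ℕ) : ℤ)) (n + (K * (wtF m + 1) : ℕ)),
        a p.1 n₁ x * b p.2 (n - n₁) x :=
  sum_congr rfl fun _ hp => finsum_eq_sum_of_support_subset _ fun _ h =>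
    ha.mem_Icc_of_mul_ne_zero hb hp hx h

lemma HasFactorialBound.seriesMul (ha : HasFactorialBound U a C) (hb : HasFactorialBound U b C)
    (haK : VanishesBelow U a K) (hbK : VanishesBelow U b K) (hC : ∀ x ∈ U, 2 ≤ C x) :
    HasFactorialBound U (seriesMul a b) (fun x => C x ^ (6 * K + 5)) := by
  intro m n x hx
  set L := K * (wtF m + 1)
  set E := wtF m + 4 * (n.natAbs + L) + 2
  have hD := hC x hx
  have hwn := (factorialWeight_pos n).le
  have hterm : ∀ p ∈ antidiagonal m, ∀ n₁ ∈ Icc (-(L : ℤ)) (n + L),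
      ‖a p.1 n₁ x * b p.2 (n - n₁) x‖ ≤ C x ^ E * factorialWeight n := by
    intro p hp n₁ hn₁
    have h := norm_mul_le_pow_mul_factorialWeight_add hD (ha p.1 n₁ x hx) (hb p.2 (n - n₁) x hx)
    rw [add_sub_cancel, wtF_add_of_mem_antidiagonal hp] at h
    rw [mem_Icc] at hn₁
    exact h.trans <| mul_le_mul_of_nonneg_right (pow_le_pow_right₀ (by linarith) (by omega)) hwn
  have hexp : wtF m + (n.natAbs + 2 * L) + E ≤ (6 * K + 5) * (wtF m + n.natAbs + 1) := by
    simp only [E, L]; nlinarith [Nat.zero_le (K * n.natAbs)]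
  have hcardW : #(Icc (-(L : ℤ)) (n + L)) ≤ 2 ^ (n.natAbs + 2 * L) := by
    refine le_trans ?_ (Nat.lt_two_pow_self (n := n.natAbs + 2 * L))
    rw [Int.card_Icc]; omega
  rw [seriesMul_eq_sum_Icc haK hbK m n hx]
  calc ‖∑ p ∈ antidiagonal m, ∑ n₁ ∈ Icc (-(L : ℤ)) (n + L), a p.1 n₁ x * b p.2 (n - n₁) x‖
      ≤ ∑ p ∈ antidiagonal m, ∑ n₁ ∈ Icc (-(L : ℤ)) (n + L), C x ^ E * factorialWeight n :=
        norm_sum_le_of_le _ fun p hp => norm_sum_le_of_le _ (hterm p hp)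
    _ = #(antidiagonal m) * (#(Icc (-(L : ℤ)) (n + L)) * (C x ^ E * factorialWeight n)) := by
        simp only [sum_const, nsmul_eq_mul]
    _ ≤ C x ^ wtF m * (C x ^ (n.natAbs + 2 * L) * (C x ^ E * factorialWeight n)) := by
        gcongr
        · exact natCast_le_pow_of_le_two_pow hD (card_antidiagonal_le_two_pow_wtF m)
        · exact natCast_le_pow_of_le_two_pow hD hcardW
    _ = C x ^ (wtF m + (n.natAbs + 2 * L) + E) * factorialWeight n := by ring
    _ ≤ C x ^ ((6 * K + 5) * (wtF m + n.natAbs + 1)) * factorialWeight n :=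
        mul_le_mul_of_nonneg_right (pow_le_pow_right₀ (by linarith) hexp) hwn
    _ = (C x ^ (6 * K + 5)) ^ (wtF m + n.natAbs + 1) * factorialWeight n := by rw [← pow_mul]

end SeriesMul

theorem stmt_4_general {N : ℕ} {S : Type*} [DecidableEq S] (U : Set (Fin N → ℂ))
    (a b : (S →₀ ℕ) → ℤ → (Fin N → ℂ) → ℂ)
    (ha : CondOyzzinv U a) (hb : CondOyzzinv U b) :
    (∀ (m : S →₀ ℕ) (n : ℤ), Set.Finite
      {q : ((S →₀ ℕ) × (S →₀ ℕ)) × ℤ | q.1 ∈ Finset.HasAntidiagonal.antidiagonal m ∧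
        ∃ x ∈ U, a q.1.1 q.2 x * b q.1.2 (n - q.2) x ≠ 0}) ∧
    CondOyzzinv U (fun m n x =>
      ∑ p ∈ Finset.HasAntidiagonal.antidiagonal m, ∑ᶠ n₁ : ℤ, a p.1 n₁ x * b p.2 (n - n₁) x) := by
  obtain ⟨C, K, hC, hC2, hK, hva, hvb, hba, hbb⟩ := ha.exists_common_bounds hb
  refine ⟨hva.finite_setOf_mul_ne_zero hvb, condOyzzinv_iff.2 ⟨fun x => C x ^ (6 * K + 5), 2 * K,
    hC.pow _, fun x hx => ?_, by omega, hva.seriesMul hvb, hba.seriesMul hbb hva hvb hC2⟩⟩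
  calc (2 : ℝ) ≤ C x := hC2 x hx
    _ ≤ C x ^ (6 * K + 5) := le_self_pow₀ (by linarith [hC2 x hx]) (by omega)

/-- If `a` and `b` are families of holomorphic functions on `U` satisfying
condition `(O^{y,z,z⁻¹})`, then each convolution coefficient
`c_{m,n} = ∑_{m₁+m₂=m, n₁+n₂=n} a_{m₁,n₁} · b_{m₂,n₂}` has only finitely many nonzero terms and
the family `c` again satisfies `(O^{y,z,z⁻¹})`: the space `O^{y,z,z⁻¹}_λ(U)` is closed under
multiplication of formal series `∑ a_{m,n} y^m z^n`. -/
theorem stmt_4 {N : ℕ} {S : Type*} [DecidableEq S] (U : Set (Fin N → ℂ))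
    (a b : (S →₀ ℕ) → ℤ → (Fin N → ℂ) → ℂ)
    (haH : ∀ m n, DifferentiableOn ℂ (a m n) U)
    (hbH : ∀ m n, DifferentiableOn ℂ (b m n) U)
    (ha : CondOyzzinv U a) (hb : CondOyzzinv U b) :
    (∀ (m : S →₀ ℕ) (n : ℤ), Set.Finite
      {q : ((S →₀ ℕ) × (S →₀ ℕ)) × ℤ | q.1 ∈ Finset.HasAntidiagonal.antidiagonal m ∧
        ∃ x ∈ U, a q.1.1 q.2 x * b q.1.2 (n - q.2) x ≠ 0}) ∧
    CondOyzzinv U (fun m n x =>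
      ∑ p ∈ Finset.HasAntidiagonal.antidiagonal m, ∑ᶠ n₁ : ℤ, a p.1 n₁ x * b p.2 (n - n₁) x) :=
  stmt_4_general U a b ha hb
end

section
/- Define pow : ℕ × ℤ → ℝ by pow(a,b) = a^b (the real zpow) if a ≥ 1, pow(0,b) = 1 if b ≤ 0, and pow(0,b) = 0 if b > 0. Then for every real number C' ≥ 1 there exists a real number C₀ ≥ 1 such that: for all integers m₁, m₂ ≥ 0 and all n₁, n₂ ∈ ℤ with n₁ ≥ −C'(m₁+1) and n₂ ≥ −C'(m₂+1), setting m = m₁ + m₂ and n = n₁ + n₂, one has pow(m₁, n₁) · pow(m₂, n₂) ≤ C₀^{m + |n| + 1} · pow(m, n). -/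
/-!
Write `a = max m₁ 1`, `a' = max m₂ 1`, `b = max (m₁ + m₂) 1`, so that away from the trivial case
`pow 0 n = 0` each `pow` is a `zpow` of one of these. For `0 < a ≤ b` and `n ≥ -c a`,
`a ^ n ≤ exp (c (b - a)) b ^ n`, because `a log (b / a) ≤ b - a`: a negative exponent bounded
by `c a` can only gain `exp (c (b - a))` when the base grows from `a` to `b`. Since `b ≤ a + a'`,
the two losses multiply to at most `exp (c b)`. The hypothesis gives `n ≥ -c a` with `c = 2 C'`,
and `b ≤ m + |n| + 1`, so `C₀ = exp (2 C')` works.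
-/

/-- `pow a b = a ^ b` (real `zpow`) if `a ≥ 1`; `pow 0 b = 1` if `b ≤ 0` and `pow 0 b = 0` if
`b > 0` (the latter being the value of the real `zpow` `(0 : ℝ) ^ b` for `b > 0`). -/
noncomputable def powIM (a : ℕ) (b : ℤ) : ℝ := if a = 0 ∧ b ≤ 0 then 1 else (a : ℝ) ^ b

open Real

theorem zpow_le_exp_mul_zpow_of_le {a b c : ℝ} {n : ℤ} (ha : 0 < a) (hab : a ≤ b) (hc : 0 ≤ c)
    (hn : -(c * a) ≤ n) : a ^ n ≤ exp (c * (b - a)) * b ^ n := by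
  have hb : 0 < b := ha.trans_le hab
  have hlog : 0 ≤ log b - log a := sub_nonneg.2 (log_le_log ha hab)
  have hmul_log : a * (log b - log a) ≤ b - a := by
    have := log_le_sub_one_of_pos (div_pos hb ha)
    rw [log_div hb.ne' ha.ne'] at this
    calc a * (log b - log a) ≤ a * (b / a - 1) := by gcongr
      _ = b - a := by field_simp
  rw [← rpow_intCast, ← rpow_intCast, rpow_def_of_pos ha, rpow_def_of_pos hb, ← exp_add,
    exp_le_exp]
  nlinarith [mul_le_mul_of_nonneg_right hn hlog]

theorem powIM_nonneg (a : ℕ) (b : ℤ) : 0 ≤ powIM a b := by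
  unfold powIM
  split
  · exact zero_le_one
  · positivity

theorem powIM_zero_of_pos {b : ℤ} (hb : 0 < b) : powIM 0 b = 0 := by
  rw [powIM, if_neg (by omega), Nat.cast_zero, zero_zpow _ hb.ne']

theorem powIM_eq_max_one_zpow {a : ℕ} {b : ℤ} (h : a = 0 → b ≤ 0) :
    powIM a b = max (a : ℝ) 1 ^ b := by
  rcases Nat.eq_zero_or_pos a with rfl | ha
  · rw [powIM, if_pos ⟨rfl, h rfl⟩, Nat.cast_zero, max_eq_right zero_le_one, one_zpow]
  · rw [powIM, if_neg (by omega), max_eq_left (by exact_mod_cast ha)]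

theorem powIM_mul_powIM_le {c : ℝ} (hc : 0 ≤ c) {m₁ m₂ : ℕ} {n₁ n₂ : ℤ}
    (h₁ : -(c * max (m₁ : ℝ) 1) ≤ n₁) (h₂ : -(c * max (m₂ : ℝ) 1) ≤ n₂) :
    powIM m₁ n₁ * powIM m₂ n₂ ≤
      exp (c * max ((m₁ + m₂ : ℕ) : ℝ) 1) * powIM (m₁ + m₂) (n₁ + n₂) := by
  have hrhs : 0 ≤ exp (c * max ((m₁ + m₂ : ℕ) : ℝ) 1) * powIM (m₁ + m₂) (n₁ + n₂) :=
    mul_nonneg (exp_pos _).le (powIM_nonneg _ _)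
  by_cases hz₁ : m₁ = 0 ∧ 0 < n₁
  · obtain ⟨rfl, hn₁⟩ := hz₁
    rwa [powIM_zero_of_pos hn₁, zero_mul]
  by_cases hz₂ : m₂ = 0 ∧ 0 < n₂
  · obtain ⟨rfl, hn₂⟩ := hz₂
    rwa [powIM_zero_of_pos hn₂, mul_zero]
  simp only [not_and, not_lt] at hz₁ hz₂
  rw [powIM_eq_max_one_zpow hz₁, powIM_eq_max_one_zpow hz₂,
    powIM_eq_max_one_zpow fun h => by have := hz₁ (by omega); have := hz₂ (by omega); omega]
  set a₁ := max (m₁ : ℝ) 1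
  set a₂ := max (m₂ : ℝ) 1
  set b := max ((m₁ + m₂ : ℕ) : ℝ) 1
  have hm₁ : (0 : ℝ) ≤ m₁ := m₁.cast_nonneg
  have hm₂ : (0 : ℝ) ≤ m₂ := m₂.cast_nonneg
  have ha₁ : 1 ≤ a₁ := le_max_right _ _
  have ha₂ : 1 ≤ a₂ := le_max_right _ _
  have ha₁b : a₁ ≤ b := max_le_max (by push_cast; linarith) le_rfl
  have ha₂b : a₂ ≤ b := max_le_max (by push_cast; linarith) le_rfl
  have hb : b ≤ a₁ + a₂ := max_le (by push_cast; gcongr <;> exact le_max_left _ _) (by linarith)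
  calc a₁ ^ n₁ * a₂ ^ n₂
      ≤ (exp (c * (b - a₁)) * b ^ n₁) * (exp (c * (b - a₂)) * b ^ n₂) :=
        mul_le_mul (zpow_le_exp_mul_zpow_of_le (by positivity) ha₁b hc h₁)
          (zpow_le_exp_mul_zpow_of_le (by positivity) ha₂b hc h₂) (by positivity) (by positivity)
    _ = exp (c * (b - a₁ + (b - a₂))) * b ^ (n₁ + n₂) := by
        rw [zpow_add₀ (by positivity), mul_add, exp_add]
        ring
    _ ≤ exp (c * b) * b ^ (n₁ + n₂) := by
        gcongr
        linarith

/-- For every real `C' ≥ 1` there exists `C₀ ≥ 1` such that for all integers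
`m₁, m₂ ≥ 0` and all `n₁, n₂ ∈ ℤ` with `n₁ ≥ −C'(m₁+1)` and `n₂ ≥ −C'(m₂+1)`, setting
`m = m₁ + m₂` and `n = n₁ + n₂`, one has
`pow m₁ n₁ · pow m₂ n₂ ≤ C₀^{m+|n|+1} · pow m n`. -/
theorem stmt_11 (C' : ℝ) (hC' : 1 ≤ C') :
    ∃ C₀ : ℝ, 1 ≤ C₀ ∧ ∀ (m₁ m₂ : ℕ) (n₁ n₂ : ℤ),
      -C' * ((m₁ : ℝ) + 1) ≤ (n₁ : ℝ) → -C' * ((m₂ : ℝ) + 1) ≤ (n₂ : ℝ) →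
      powIM m₁ n₁ * powIM m₂ n₂ ≤
        C₀ ^ ((m₁ + m₂) + (n₁ + n₂).natAbs + 1) * powIM (m₁ + m₂) (n₁ + n₂) := by
  have hc : 0 ≤ 2 * C' := by linarith
  have hlower (m : ℕ) (n : ℤ) (h : -C' * ((m : ℝ) + 1) ≤ n) : -(2 * C' * max (m : ℝ) 1) ≤ n := by
    have hm : (m : ℝ) + 1 ≤ 2 * max (m : ℝ) 1 := by
      linarith [le_max_left (m : ℝ) 1, le_max_right (m : ℝ) 1]
    nlinarith
  refine ⟨exp (2 * C'), one_le_exp hc, fun m₁ m₂ n₁ n₂ h₁ h₂ => ?_⟩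
  refine (powIM_mul_powIM_le hc (hlower m₁ n₁ h₁) (hlower m₂ n₂ h₂)).trans ?_
  gcongr
  · exact powIM_nonneg _ _
  rw [← exp_nat_mul, mul_comm]
  gcongr
  exact max_le (by push_cast; linarith [((n₁ + n₂).natAbs.cast_nonneg : (0 : ℝ) ≤ _)])
    (by exact_mod_cast Nat.succ_pos _)
end
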